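/- Let F be a construction scheme over ω₁ of type {(m_k, 2, r_{k+1})} (so n_k = 2 for all k ≥ 1). Define for each α ∈ ω₁: A_α = {2k + Ξ_α(k) | k ≥ 1, Ξ_α(k) ≥ 0} and B_α = {2k + (1 − Ξ_α(k)) | k ≥ 1, Ξ_α(k) ≥ 0}. Then: (i) each A_α and B_α is infinite; (ii) A_α ∩ B_α = ∅ for each α; (iii) for α < β, A_α ∖ A_β and B_α ∖ B_β are finite (so both families are ⊆*-increasing towers); and (iv) the Hausdorff condition holds: for each β ∈ ω₁ and k ∈ ω, the set {α < β | A_β ∩ B_α ⊆ k} is finite. -/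
import Mathlib


open Set

/-- A *type* for construction schemes: a sequence `(m_k, n_{k+1}, r_{k+1})`. -/
structure CSType where
  m : ℕ → ℕ
  n : ℕ → ℕ
  r : ℕ → ℕ
  m_zero : m 0 = 1
  n_ge : ∀ k, 1 ≤ k → 2 ≤ n k
  r_inf : ∀ j N, ∃ k, N ≤ k ∧ 1 ≤ k ∧ r k = j
  r_lt : ∀ k, r (k + 1) < m k
  m_rec : ∀ k, m (k + 1) = r (k + 1) + (m k - r (k + 1)) * n (k + 1)

/-- `C` is an initial segment of `A` (written `C ⊑ A` in the paper). -/
def InitSeg (C A : Finset Ordinal) : Prop :=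
  C ⊆ A ∧ ∀ c ∈ C, ∀ d ∈ A, d ≤ c → d ∈ C

/-- `D` (with root `R`) is the canonical decomposition of `F`, an element of rank `k+1`,
into `n_{k+1}` elements of rank `k` forming a Δ-system with root `R` of size `r_{k+1}`,
with `R < D 0 \ R < ⋯ < D (n_{k+1} - 1) \ R`. -/
def CanonDecomp (τ : CSType) (𝓕 : Set (Finset Ordinal)) (k : ℕ)
    (F : Finset Ordinal) (D : Fin (τ.n (k + 1)) → Finset Ordinal)
    (R : Finset Ordinal) : Prop :=
  (∀ i, D i ∈ 𝓕 ∧ (D i).card = τ.m k) ∧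
  (∀ x, x ∈ F ↔ ∃ i, x ∈ D i) ∧
  R.card = τ.r (k + 1) ∧
  (∀ i j, i ≠ j → D i ∩ D j = R) ∧
  (∀ a ∈ R, ∀ i, ∀ b ∈ D i, b ∉ R → a < b) ∧
  (∀ i j : Fin (τ.n (k + 1)), i < j → ∀ b ∈ D i, b ∉ R → ∀ c ∈ D j, c ∉ R → b < c)

/-- `𝓕` is a construction scheme over the set of ordinals `X` of type `τ`.
Rank is measured by cardinality: an element of rank `k` has cardinality `m_k`. -/
structure IsConstructionScheme (τ : CSType) (X : Set Ordinal)
    (𝓕 : Set (Finset Ordinal)) : Prop where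
  subset_X : ∀ F ∈ 𝓕, (F : Set Ordinal) ⊆ X
  card_mem : ∀ F ∈ 𝓕, ∃ k, F.card = τ.m k
  cofinal : ∀ A : Finset Ordinal, (A : Set Ordinal) ⊆ X → ∃ F ∈ 𝓕, A ⊆ F
  initSeg : ∀ k, ∀ E ∈ 𝓕, ∀ F ∈ 𝓕, E.card = τ.m k → F.card = τ.m k →
    InitSeg (E ∩ F) E
  decomp : ∀ k, ∀ F ∈ 𝓕, F.card = τ.m (k + 1) →
    ∃! D : Fin (τ.n (k + 1)) → Finset Ordinal, ∃ R, CanonDecomp τ 𝓕 k F D R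

/-- `ρ(α,β)`: the least `k` such that some element of `𝓕` of rank `k` contains both. -/
noncomputable def csRho (τ : CSType) (𝓕 : Set (Finset Ordinal)) (α β : Ordinal) : ℕ :=
  sInf {k | ∃ F ∈ 𝓕, F.card = τ.m k ∧ α ∈ F ∧ β ∈ F}

/-- The `k`-closure `(β)_k = {α ≤ β | ρ(α,β) ≤ k}` (within `X`). -/
def csClos (τ : CSType) (𝓕 : Set (Finset Ordinal)) (X : Set Ordinal)
    (k : ℕ) (β : Ordinal) : Set Ordinal :=
  {α ∈ X | α ≤ β ∧ csRho τ 𝓕 α β ≤ k}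

/-- `Δ(α,β) = min({k | |(α)_k| ≠ |(β)_k|} ∪ {ω})`, valued in `ℕ∞` (where `⊤` plays
the role of `ω`). -/
noncomputable def csDelta (τ : CSType) (𝓕 : Set (Finset Ordinal)) (X : Set Ordinal)
    (α β : Ordinal) : ℕ∞ :=
  sInf ((fun k : ℕ => (k : ℕ∞)) ''
    {k | (csClos τ 𝓕 X k α).ncard ≠ (csClos τ 𝓕 X k β).ncard})

/-- The function `Ξ_α : ω → ω ∪ {-1}` associated to a construction scheme. -/
noncomputable def csXi (τ : CSType) (𝓕 : Set (Finset Ordinal)) (X : Set Ordinal)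
    (α : Ordinal) (k : ℕ) : ℤ :=
  if k = 0 then 0
  else if (csClos τ 𝓕 X k α).ncard ≤ τ.r k then -1
  else (((csClos τ 𝓕 X k α).ncard : ℤ) - ((csClos τ 𝓕 X (k - 1) α).ncard : ℤ)) /
    ((τ.m (k - 1) : ℤ) - (τ.r k : ℤ))

/-- `F` (of rank `k+1`) captures the pair `{α, β}`: with canonical decomposition
`D` and root `R`, `α ∈ D 0 \ R`, `β ∈ D 1 \ R`, and the increasing bijection from
`D 0` to `D 1` sends `α` to `β`. -/
def CapturesPair (τ : CSType) (𝓕 : Set (Finset Ordinal)) (k : ℕ)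
    (F : Finset Ordinal) (α β : Ordinal) : Prop :=
  F ∈ 𝓕 ∧ F.card = τ.m (k + 1) ∧
  ∃ D R, CanonDecomp τ 𝓕 k F D R ∧
    ∃ (h0 : 0 < τ.n (k + 1)) (h1 : 1 < τ.n (k + 1)),
      α ∈ D ⟨0, h0⟩ ∧ α ∉ R ∧ β ∈ D ⟨1, h1⟩ ∧ β ∉ R ∧
      ((D ⟨0, h0⟩ : Set Ordinal) ∩ Set.Iic α).ncard =
        ((D ⟨1, h1⟩ : Set Ordinal) ∩ Set.Iic β).ncard

/-- `𝓕` is 2-capturing: for every uncountable `S ⊆ X` and every `k₀` there are a pair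
`{α, β} ∈ [S]²` and `F ∈ 𝓕` of rank `l > k₀` capturing it. -/
def TwoCapturing (τ : CSType) (X : Set Ordinal) (𝓕 : Set (Finset Ordinal)) : Prop :=
  ∀ S : Set Ordinal, S ⊆ X → ¬ S.Countable → ∀ k₀ : ℕ,
    ∃ k, k₀ ≤ k ∧ ∃ F α β, α ∈ S ∧ β ∈ S ∧ α < β ∧ CapturesPair τ 𝓕 k F α β

/-- `A_α = {2k + Ξ_α(k) | k ≥ 1, Ξ_α(k) ≥ 0}`. -/
def hgA (τ : CSType) (𝓕 : Set (Finset Ordinal)) (X : Set Ordinal)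
    (α : Ordinal) : Set ℕ :=
  {j | ∃ k : ℕ, 1 ≤ k ∧ 0 ≤ csXi τ 𝓕 X α k ∧ (j : ℤ) = 2 * k + csXi τ 𝓕 X α k}

/-- `B_α = {2k + (1 - Ξ_α(k)) | k ≥ 1, Ξ_α(k) ≥ 0}`. -/
def hgB (τ : CSType) (𝓕 : Set (Finset Ordinal)) (X : Set Ordinal)
    (α : Ordinal) : Set ℕ :=
  {j | ∃ k : ℕ, 1 ≤ k ∧ 0 ≤ csXi τ 𝓕 X α k ∧
    (j : ℤ) = 2 * k + (1 - csXi τ 𝓕 X α k)}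

section Aux

variable {τ : CSType} {X : Set Ordinal} {𝓕 : Set (Finset Ordinal)} {α β : Ordinal}
  {F : Finset Ordinal} {k : ℕ}

private lemma m_lt_succ (τ : CSType) (k : ℕ) : τ.m k < τ.m (k + 1) := by
  have h1 := τ.r_lt k
  have h2 := τ.n_ge (k + 1) (by omega)
  have h3 := τ.m_rec k
  have h4 : (τ.m k - τ.r (k + 1)) * 2 ≤ (τ.m k - τ.r (k + 1)) * τ.n (k + 1) :=
    Nat.mul_le_mul_left _ h2
  omega

private lemma m_mono (τ : CSType) : StrictMono τ.m :=
  strictMono_nat_of_lt_succ (m_lt_succ τ)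

private lemma rho_nonempty (hCS : IsConstructionScheme τ X 𝓕) (hα : α ∈ X) (hβ : β ∈ X) :
    {k | ∃ F ∈ 𝓕, F.card = τ.m k ∧ α ∈ F ∧ β ∈ F}.Nonempty := by
  obtain ⟨F, hF, hsub⟩ := hCS.cofinal {α, β} (by
    intro x hx
    simp only [Finset.coe_insert, Finset.coe_singleton, Set.mem_insert_iff,
      Set.mem_singleton_iff] at hx
    rcases hx with rfl | rfl <;> assumption)
  obtain ⟨k, hk⟩ := hCS.card_mem F hF
  exact ⟨k, F, hF, hk, hsub (by simp), hsub (by simp)⟩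

private lemma rho_le (hF : F ∈ 𝓕) (hFc : F.card = τ.m k) (hα : α ∈ F) (hβ : β ∈ F) :
    csRho τ 𝓕 α β ≤ k :=
  Nat.sInf_le ⟨F, hF, hFc, hα, hβ⟩

private lemma rho_mem (hCS : IsConstructionScheme τ X 𝓕) (hα : α ∈ X) (hβ : β ∈ X) :
    ∃ F ∈ 𝓕, F.card = τ.m (csRho τ 𝓕 α β) ∧ α ∈ F ∧ β ∈ F :=
  Nat.sInf_mem (rho_nonempty hCS hα hβ)

private lemma descent (hCS : IsConstructionScheme τ X 𝓕) :
    ∀ k, ∀ F ∈ 𝓕, F.card = τ.m k → ∀ α ∈ F, ∀ k' ≤ k,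
      ∃ E ∈ 𝓕, E ⊆ F ∧ α ∈ E ∧ E.card = τ.m k' := by
  intro k
  induction k with
  | zero =>
    intro F hF hc α hα k' hk'
    interval_cases k'
    exact ⟨F, hF, Finset.Subset.refl F, hα, hc⟩
  | succ j ih =>
    intro F hF hc α hα k' hk'
    rcases eq_or_lt_of_le hk' with rfl | hlt
    · exact ⟨F, hF, Finset.Subset.refl F, hα, hc⟩
    · obtain ⟨D, ⟨R, hDR⟩, -⟩ := hCS.decomp j F hF hc
      obtain ⟨i, hi⟩ := (hDR.2.1 α).mp hα
      obtain ⟨E, hE, hEsub, hαE, hEc⟩ :=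
        ih (D i) (hDR.1 i).1 (hDR.1 i).2 α hi k' (by omega)
      exact ⟨E, hE, hEsub.trans (fun x hx => (hDR.2.1 x).mpr ⟨i, hx⟩), hαE, hEc⟩

private lemma exF (hCS : IsConstructionScheme τ X 𝓕) (hX : X.Infinite) (hα : α ∈ X) (k : ℕ) :
    ∃ F ∈ 𝓕, F.card = τ.m k ∧ α ∈ F := by
  obtain ⟨A, hAX, hAc⟩ := hX.exists_subset_card_eq (τ.m k)
  obtain ⟨F, hF, hAF⟩ := hCS.cofinal (insert α A) (by
    intro x hx
    simp only [Finset.coe_insert, Set.mem_insert_iff, Finset.mem_coe] at hx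
    rcases hx with rfl | hx
    · exact hα
    · exact hAX hx)
  obtain ⟨K, hK⟩ := hCS.card_mem F hF
  have hle : τ.m k ≤ τ.m K := by
    calc τ.m k = A.card := hAc.symm
    _ ≤ F.card := Finset.card_le_card (fun x hx => hAF (Finset.mem_insert_of_mem hx))
    _ = τ.m K := hK
  obtain ⟨E, hE, -, hαE, hEc⟩ :=
    descent hCS K F hF hK α (hAF (Finset.mem_insert_self α A)) k ((m_mono τ).le_iff_le.mp hle)
  exact ⟨E, hE, hEc, hαE⟩

private lemma closEq (hCS : IsConstructionScheme τ X 𝓕) (hα : α ∈ X)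
    (hF : F ∈ 𝓕) (hFc : F.card = τ.m k) (hαF : α ∈ F) :
    csClos τ 𝓕 X k α = ↑(F.filter (fun x => x ≤ α)) := by
  ext x
  simp only [csClos, Set.mem_setOf_eq, Finset.coe_filter, Finset.mem_coe]
  constructor
  · rintro ⟨hxX, hxα, hρ⟩
    obtain ⟨E, hE, hEc, hxE, hαE⟩ := rho_mem hCS hxX hα
    obtain ⟨E', hE', hE'F, hαE', hE'c⟩ := descent hCS k F hF hFc α hαF _ hρ
    have hIS := hCS.initSeg (csRho τ 𝓕 x α) E hE E' hE' hEc hE'c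
    have hx' : x ∈ E ∩ E' :=
      hIS.2 α (Finset.mem_inter.mpr ⟨hαE, hαE'⟩) x hxE hxα
    exact ⟨hE'F (Finset.mem_inter.mp hx').2, hxα⟩
  · rintro ⟨hxF, hxα⟩
    exact ⟨hCS.subset_X F hF hxF, hxα, rho_le hF hFc hxF hαF⟩

private lemma closCard (hCS : IsConstructionScheme τ X 𝓕) (hα : α ∈ X)
    (hF : F ∈ 𝓕) (hFc : F.card = τ.m k) (hαF : α ∈ F) :
    (csClos τ 𝓕 X k α).ncard = (F.filter (fun x => x ≤ α)).card := by
  rw [closEq hCS hα hF hFc hαF, Set.ncard_coe_finset]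

private lemma piece_cases (h2 : τ.n (k + 1) = 2)
    (h0 : 0 < τ.n (k + 1)) (h1 : 1 < τ.n (k + 1))
    {D : Fin (τ.n (k + 1)) → Finset Ordinal} {R : Finset Ordinal}
    (hDR : CanonDecomp τ 𝓕 k F D R) {x : Ordinal} (hx : x ∈ F) :
    x ∈ D ⟨0, h0⟩ ∨ x ∈ D ⟨1, h1⟩ := by
  obtain ⟨i, hi⟩ := (hDR.2.1 x).mp hx
  have hlt : (i : ℕ) < 2 := by have := i.isLt; omega
  rcases (by omega : (i : ℕ) = 0 ∨ (i : ℕ) = 1) with h | h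
  · left
    have he : i = (⟨0, h0⟩ : Fin (τ.n (k + 1))) := Fin.ext h
    rwa [he] at hi
  · right
    have he : i = (⟨1, h1⟩ : Fin (τ.n (k + 1))) := Fin.ext h
    rwa [he] at hi

private lemma root_subset (h0 : 0 < τ.n (k + 1)) (h1 : 1 < τ.n (k + 1))
    {D : Fin (τ.n (k + 1)) → Finset Ordinal} {R : Finset Ordinal}
    (hDR : CanonDecomp τ 𝓕 k F D R) (i : Fin (τ.n (k + 1))) : R ⊆ D i := by
  by_cases h : (i : ℕ) = 0
  · have hij : i ≠ (⟨1, h1⟩ : Fin (τ.n (k + 1))) := by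
      intro he; rw [he] at h; simp at h
    rw [← hDR.2.2.2.1 i _ hij]
    exact Finset.inter_subset_left
  · have hij : i ≠ (⟨0, h0⟩ : Fin (τ.n (k + 1))) := by
      intro he; rw [he] at h; simp at h
    rw [← hDR.2.2.2.1 i _ hij]
    exact Finset.inter_subset_left

set_option maxHeartbeats 1000000 in
private lemma clos_spec (hCS : IsConstructionScheme τ X 𝓕) (hα : α ∈ X)
    (h2 : τ.n (k + 1) = 2)
    (h0 : 0 < τ.n (k + 1)) (h1 : 1 < τ.n (k + 1))
    (hF : F ∈ 𝓕) (hFc : F.card = τ.m (k + 1)) (hαF : α ∈ F)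
    {D : Fin (τ.n (k + 1)) → Finset Ordinal} {R : Finset Ordinal}
    (hDR : CanonDecomp τ 𝓕 k F D R) :
    (α ∈ R → csXi τ 𝓕 X α (k + 1) = -1) ∧
    (α ∈ D ⟨0, h0⟩ → α ∉ R → csXi τ 𝓕 X α (k + 1) = 0) ∧
    (α ∈ D ⟨1, h1⟩ → α ∉ R → csXi τ 𝓕 X α (k + 1) = 1) := by
  have hDsub : ∀ i, D i ⊆ F := fun i x hx => (hDR.2.1 x).mpr ⟨i, hx⟩
  have hc1 := closCard hCS hα hF hFc hαF
  have hi01 : (⟨0, h0⟩ : Fin (τ.n (k + 1))) < ⟨1, h1⟩ := by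
    rw [Fin.lt_def]
    exact Nat.zero_lt_one
  have hne01 : (⟨0, h0⟩ : Fin (τ.n (k + 1))) ≠ ⟨1, h1⟩ := ne_of_lt hi01
  refine ⟨?_, ?_, ?_⟩
  · intro hαR
    have hsub : F.filter (fun x => x ≤ α) ⊆ R := by
      intro x hx
      rw [Finset.mem_filter] at hx
      by_contra hxR
      obtain ⟨i, hi⟩ := (hDR.2.1 x).mp hx.1
      exact absurd (hDR.2.2.2.2.1 α hαR i x hi hxR) (not_lt.mpr hx.2)
    have hle : (csClos τ 𝓕 X (k + 1) α).ncard ≤ τ.r (k + 1) := by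
      rw [hc1, ← hDR.2.2.1]
      exact Finset.card_le_card hsub
    simp only [csXi, if_neg (Nat.succ_ne_zero k), if_pos hle]
  · intro hαD hαR
    have hEq : F.filter (fun x => x ≤ α) = (D ⟨0, h0⟩).filter (fun x => x ≤ α) := by
      apply Finset.Subset.antisymm
      · intro x hx
        rw [Finset.mem_filter] at hx ⊢
        refine ⟨?_, hx.2⟩
        rcases piece_cases h2 h0 h1 hDR hx.1 with h | h
        · exact h
        · by_cases hxR : x ∈ R
          · exact root_subset h0 h1 hDR _ hxR
          · exact absurd (hDR.2.2.2.2.2 _ _ hi01 α hαD hαR x h hxR) (not_lt.mpr hx.2)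
      · exact Finset.filter_subset_filter _ (hDsub _)
    have hck : (csClos τ 𝓕 X k α).ncard = ((D ⟨0, h0⟩).filter (fun x => x ≤ α)).card :=
      closCard hCS hα (hDR.1 _).1 (hDR.1 _).2 hαD
    have hncard : (csClos τ 𝓕 X (k + 1) α).ncard = (csClos τ 𝓕 X k α).ncard := by
      rw [hc1, hck, hEq]
    have hgt : τ.r (k + 1) < (csClos τ 𝓕 X (k + 1) α).ncard := by
      rw [hc1]
      have hsub : R ⊆ F.filter (fun x => x ≤ α) := by
        intro x hxR
        rw [Finset.mem_filter]
        exact ⟨hDsub _ (root_subset h0 h1 hDR ⟨0, h0⟩ hxR),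
          le_of_lt (hDR.2.2.2.2.1 x hxR _ α hαD hαR)⟩
      have hmem : α ∈ F.filter (fun x => x ≤ α) := Finset.mem_filter.mpr ⟨hαF, le_refl α⟩
      rw [← hDR.2.2.1]
      exact Finset.card_lt_card ⟨hsub, fun hcon => hαR (hcon hmem)⟩
    simp only [csXi, if_neg (Nat.succ_ne_zero k), if_neg (not_le.mpr hgt), Nat.add_sub_cancel]
    rw [hncard, sub_self]
    exact Int.zero_ediv _
  · intro hαD hαR
    have hD0le : ∀ x ∈ D ⟨0, h0⟩, x ≤ α := by
      intro x hx
      by_cases hxR : x ∈ R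
      · exact le_of_lt (hDR.2.2.2.2.1 x hxR _ α hαD hαR)
      · exact le_of_lt (hDR.2.2.2.2.2 _ _ hi01 x hx hxR α hαD hαR)
    have hEq : F.filter (fun x => x ≤ α) =
        D ⟨0, h0⟩ ∪ (D ⟨1, h1⟩).filter (fun x => x ≤ α) := by
      apply Finset.Subset.antisymm
      · intro x hx
        rw [Finset.mem_filter] at hx
        rcases piece_cases h2 h0 h1 hDR hx.1 with h | h
        · exact Finset.mem_union_left _ h
        · exact Finset.mem_union_right _ (Finset.mem_filter.mpr ⟨h, hx.2⟩)
      · intro x hx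
        rcases Finset.mem_union.mp hx with h | h
        · exact Finset.mem_filter.mpr ⟨hDsub _ h, hD0le x h⟩
        · rw [Finset.mem_filter] at h ⊢
          exact ⟨hDsub _ h.1, h.2⟩
    have hInter : D ⟨0, h0⟩ ∩ (D ⟨1, h1⟩).filter (fun x => x ≤ α) = R := by
      apply Finset.Subset.antisymm
      · intro x hx
        rw [Finset.mem_inter, Finset.mem_filter] at hx
        have hx2 : x ∈ D ⟨0, h0⟩ ∩ D ⟨1, h1⟩ :=
          Finset.mem_inter.mpr ⟨hx.1, hx.2.1⟩
        rwa [hDR.2.2.2.1 _ _ hne01] at hx2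
      · intro x hxR
        rw [Finset.mem_inter, Finset.mem_filter]
        exact ⟨root_subset h0 h1 hDR _ hxR, root_subset h0 h1 hDR _ hxR,
          le_of_lt (hDR.2.2.2.2.1 x hxR _ α hαD hαR)⟩
    have hck : (csClos τ 𝓕 X k α).ncard = ((D ⟨1, h1⟩).filter (fun x => x ≤ α)).card :=
      closCard hCS hα (hDR.1 _).1 (hDR.1 _).2 hαD
    have h0card : (D ⟨0, h0⟩).card = τ.m k := (hDR.1 _).2
    have hRcard : R.card = τ.r (k + 1) := hDR.2.2.1
    have hunion : (D ⟨0, h0⟩ ∪ (D ⟨1, h1⟩).filter (fun x => x ≤ α)).card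
        + (D ⟨0, h0⟩ ∩ (D ⟨1, h1⟩).filter (fun x => x ≤ α)).card
        = (D ⟨0, h0⟩).card + ((D ⟨1, h1⟩).filter (fun x => x ≤ α)).card :=
      Finset.card_union_add_card_inter _ _
    have hIc : (D ⟨0, h0⟩ ∩ (D ⟨1, h1⟩).filter (fun x => x ≤ α)).card = R.card :=
      congrArg Finset.card hInter
    have hcongr : (F.filter (fun x => x ≤ α)).card =
        (D ⟨0, h0⟩ ∪ (D ⟨1, h1⟩).filter (fun x => x ≤ α)).card :=
      congrArg Finset.card hEq
    have hsum : (csClos τ 𝓕 X (k + 1) α).ncard + τ.r (k + 1) =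
        τ.m k + (csClos τ 𝓕 X k α).ncard := by
      rw [hc1, hck, hcongr, ← h0card, ← hRcard, ← hIc]
      exact Finset.card_union_add_card_inter _ _
    have hrm := τ.r_lt k
    have hle0 : (D ⟨0, h0⟩).card ≤ (D ⟨0, h0⟩ ∪ (D ⟨1, h1⟩).filter (fun x => x ≤ α)).card :=
      Finset.card_le_card Finset.subset_union_left
    have hgt : τ.r (k + 1) < (csClos τ 𝓕 X (k + 1) α).ncard := by
      rw [hc1, hcongr]
      omega
    simp only [csXi, if_neg (Nat.succ_ne_zero k), if_neg (not_le.mpr hgt), Nat.add_sub_cancel]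
    have hnum : ((csClos τ 𝓕 X (k + 1) α).ncard : ℤ) - ((csClos τ 𝓕 X k α).ncard : ℤ)
        = (τ.m k : ℤ) - (τ.r (k + 1) : ℤ) := by omega
    rw [hnum]
    exact Int.ediv_self (by omega)

private lemma xi_cases (hCS : IsConstructionScheme τ X 𝓕) (hX : X.Infinite)
    (hn : ∀ k, 1 ≤ k → τ.n k = 2) (hα : α ∈ X) (k : ℕ) :
    csXi τ 𝓕 X α (k + 1) = -1 ∨ csXi τ 𝓕 X α (k + 1) = 0 ∨ csXi τ 𝓕 X α (k + 1) = 1 := by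
  obtain ⟨F, hF, hFc, hαF⟩ := exF hCS hX hα (k + 1)
  obtain ⟨D, ⟨R, hDR⟩, -⟩ := hCS.decomp k F hF hFc
  have h2 := hn (k + 1) (by omega)
  have h0 : 0 < τ.n (k + 1) := by omega
  have h1 : 1 < τ.n (k + 1) := by omega
  have hs := clos_spec hCS hα h2 h0 h1 hF hFc hαF hDR
  by_cases hαR : α ∈ R
  · exact Or.inl (hs.1 hαR)
  · rcases piece_cases h2 h0 h1 hDR hαF with h | h
    · exact Or.inr (Or.inl (hs.2.1 h hαR))
    · exact Or.inr (Or.inr (hs.2.2 h hαR))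

private lemma xi_nonneg_of_r0 (hCS : IsConstructionScheme τ X 𝓕) (hX : X.Infinite)
    (hn : ∀ k, 1 ≤ k → τ.n k = 2) (hα : α ∈ X) (k : ℕ) (hr : τ.r (k + 1) = 0) :
    0 ≤ csXi τ 𝓕 X α (k + 1) := by
  obtain ⟨F, hF, hFc, hαF⟩ := exF hCS hX hα (k + 1)
  obtain ⟨D, ⟨R, hDR⟩, -⟩ := hCS.decomp k F hF hFc
  have h2 := hn (k + 1) (by omega)
  have h0 : 0 < τ.n (k + 1) := by omega
  have h1 : 1 < τ.n (k + 1) := by omega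
  have hs := clos_spec hCS hα h2 h0 h1 hF hFc hαF hDR
  have hαR : α ∉ R := by
    intro h
    have hc : R.card = 0 := hDR.2.2.1.trans hr
    rw [Finset.card_eq_zero] at hc
    rw [hc] at h
    exact absurd h (Finset.notMem_empty α)
  rcases piece_cases h2 h0 h1 hDR hαF with h | h
  · have := hs.2.1 h hαR; omega
  · have := hs.2.2 h hαR; omega

private lemma xi_succ_agree (hCS : IsConstructionScheme τ X 𝓕) (hX : X.Infinite)
    (hn : ∀ k, 1 ≤ k → τ.n k = 2) (hα : α ∈ X) (hβ : β ∈ X)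
    (hab : α < β) (k : ℕ) (hρ : csRho τ 𝓕 α β ≤ k)
    (hξ : 0 ≤ csXi τ 𝓕 X α (k + 1)) :
    csXi τ 𝓕 X β (k + 1) = csXi τ 𝓕 X α (k + 1) ∧ 0 ≤ csXi τ 𝓕 X β (k + 1) := by
  obtain ⟨F, hF, hFc, hβF⟩ := exF hCS hX hβ (k + 1)
  have hαF : α ∈ F := by
    have hmem : α ∈ csClos τ 𝓕 X (k + 1) β := by
      simp only [csClos, Set.mem_setOf_eq]
      exact ⟨hα, hab.le, by omega⟩
    rw [closEq hCS hβ hF hFc hβF] at hmem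
    exact (Finset.mem_filter.mp (Finset.mem_coe.mp hmem)).1
  obtain ⟨D, ⟨R, hDR⟩, -⟩ := hCS.decomp k F hF hFc
  have h2 := hn (k + 1) (by omega)
  have h0 : 0 < τ.n (k + 1) := by omega
  have h1 : 1 < τ.n (k + 1) := by omega
  have hsα := clos_spec hCS hα h2 h0 h1 hF hFc hαF hDR
  have hsβ := clos_spec hCS hβ h2 h0 h1 hF hFc hβF hDR
  have hαR : α ∉ R := by
    intro h
    rw [hsα.1 h] at hξ
    omega
  rcases piece_cases h2 h0 h1 hDR hβF with hβ0 | hβ1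
  · have hαD : α ∈ D ⟨0, h0⟩ := by
      have hmem : α ∈ csClos τ 𝓕 X k β := by
        simp only [csClos, Set.mem_setOf_eq]
        exact ⟨hα, hab.le, hρ⟩
      rw [closEq hCS hβ (hDR.1 _).1 (hDR.1 _).2 hβ0] at hmem
      exact (Finset.mem_filter.mp (Finset.mem_coe.mp hmem)).1
    have hβR : β ∉ R := fun h =>
      absurd (hDR.2.2.2.2.1 β h _ α hαD hαR) (not_lt.mpr hab.le)
    rw [hsβ.2.1 hβ0 hβR, hsα.2.1 hαD hαR]
    exact ⟨rfl, le_refl 0⟩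
  · have hαD : α ∈ D ⟨1, h1⟩ := by
      have hmem : α ∈ csClos τ 𝓕 X k β := by
        simp only [csClos, Set.mem_setOf_eq]
        exact ⟨hα, hab.le, hρ⟩
      rw [closEq hCS hβ (hDR.1 _).1 (hDR.1 _).2 hβ1] at hmem
      exact (Finset.mem_filter.mp (Finset.mem_coe.mp hmem)).1
    have hβR : β ∉ R := fun h =>
      absurd (hDR.2.2.2.2.1 β h _ α hαD hαR) (not_lt.mpr hab.le)
    rw [hsβ.2.2 hβ1 hβR, hsα.2.2 hαD hαR]
    exact ⟨rfl, zero_le_one⟩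

private lemma xi_split (hCS : IsConstructionScheme τ X 𝓕)
    (hn : ∀ k, 1 ≤ k → τ.n k = 2) (hα : α ∈ X) (hβ : β ∈ X) (hab : α < β) :
    ∃ l : ℕ, csRho τ 𝓕 α β = l + 1 ∧ csXi τ 𝓕 X α (l + 1) = 0 ∧
      csXi τ 𝓕 X β (l + 1) = 1 := by
  obtain ⟨F, hF, hFc, hαF, hβF⟩ := rho_mem hCS hα hβ
  have hpos : csRho τ 𝓕 α β ≠ 0 := by
    intro h0
    rw [h0, τ.m_zero, Finset.card_eq_one] at hFc
    obtain ⟨a, rfl⟩ := hFc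
    rw [Finset.mem_singleton] at hαF hβF
    exact absurd (hαF.trans hβF.symm) (ne_of_lt hab)
  obtain ⟨l, hl⟩ : ∃ l, csRho τ 𝓕 α β = l + 1 := ⟨csRho τ 𝓕 α β - 1, by omega⟩
  rw [hl] at hFc
  obtain ⟨D, ⟨R, hDR⟩, -⟩ := hCS.decomp l F hF hFc
  have h2 := hn (l + 1) (by omega)
  have h0 : 0 < τ.n (l + 1) := by omega
  have h1 : 1 < τ.n (l + 1) := by omega
  have hsα := clos_spec hCS hα h2 h0 h1 hF hFc hαF hDR
  have hsβ := clos_spec hCS hβ h2 h0 h1 hF hFc hβF hDR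
  have hρlt : ∀ i : Fin (τ.n (l + 1)), ¬(α ∈ D i ∧ β ∈ D i) := by
    rintro i ⟨hm, hm'⟩
    have := rho_le (hDR.1 i).1 (hDR.1 i).2 hm hm'
    omega
  have hαR : α ∉ R := by
    intro h
    rcases piece_cases h2 h0 h1 hDR hβF with hbb | hbb
    · exact hρlt _ ⟨root_subset h0 h1 hDR _ h, hbb⟩
    · exact hρlt _ ⟨root_subset h0 h1 hDR _ h, hbb⟩
  have hβR : β ∉ R := by
    intro h
    rcases piece_cases h2 h0 h1 hDR hαF with ha | ha
    · exact hρlt _ ⟨ha, root_subset h0 h1 hDR _ h⟩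
    · exact hρlt _ ⟨ha, root_subset h0 h1 hDR _ h⟩
  rcases piece_cases h2 h0 h1 hDR hαF with ha | ha
  · rcases piece_cases h2 h0 h1 hDR hβF with hbb | hbb
    · exact absurd ⟨ha, hbb⟩ (hρlt _)
    · exact ⟨l, hl, hsα.2.1 ha hαR, hsβ.2.2 hbb hβR⟩
  · rcases piece_cases h2 h0 h1 hDR hβF with hbb | hbb
    · have hi01 : (⟨0, h0⟩ : Fin (τ.n (l + 1))) < ⟨1, h1⟩ := by
        rw [Fin.lt_def]
        exact Nat.zero_lt_one
      exact absurd (hDR.2.2.2.2.2 _ _ hi01 β hbb hβR α ha hαR) (not_lt.mpr hab.le)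
    · exact absurd ⟨ha, hbb⟩ (hρlt _)

end Aux

/-- For a construction scheme over `ω₁` of a type with `n_k = 2`,
the families `A_α`, `B_α` form a Hausdorff gap: (i) each `A_α`, `B_α` is infinite;
(ii) `A_α ∩ B_α = ∅`; (iii) both families are `⊆*`-increasing; (iv) the Hausdorff
condition holds. -/
theorem stmt15 (τ : CSType) (𝓕 : Set (Finset Ordinal))
    (hn : ∀ k, 1 ≤ k → τ.n k = 2)
    (hCS : IsConstructionScheme τ (Set.Iio (Ordinal.omega 1)) 𝓕) :
    (∀ α ∈ (Set.Iio (Ordinal.omega 1)),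
      (hgA τ 𝓕 (Set.Iio (Ordinal.omega 1)) α).Infinite ∧ (hgB τ 𝓕 (Set.Iio (Ordinal.omega 1)) α).Infinite) ∧
    (∀ α ∈ (Set.Iio (Ordinal.omega 1)), hgA τ 𝓕 (Set.Iio (Ordinal.omega 1)) α ∩ hgB τ 𝓕 (Set.Iio (Ordinal.omega 1)) α = ∅) ∧
    (∀ α ∈ (Set.Iio (Ordinal.omega 1)), ∀ β ∈ (Set.Iio (Ordinal.omega 1)), α < β →
      (hgA τ 𝓕 (Set.Iio (Ordinal.omega 1)) α \ hgA τ 𝓕 (Set.Iio (Ordinal.omega 1)) β).Finite ∧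
      (hgB τ 𝓕 (Set.Iio (Ordinal.omega 1)) α \ hgB τ 𝓕 (Set.Iio (Ordinal.omega 1)) β).Finite) ∧
    (∀ β ∈ (Set.Iio (Ordinal.omega 1)), ∀ k : ℕ,
      {α : Ordinal | α < β ∧
        hgA τ 𝓕 (Set.Iio (Ordinal.omega 1)) β ∩ hgB τ 𝓕 (Set.Iio (Ordinal.omega 1)) α ⊆ Set.Iio k}.Finite) := by
  have hXinf : (Set.Iio (Ordinal.omega 1)).Infinite := by
    exact Set.infinite_of_injective_forall_mem Nat.cast_injective
      (fun n => (Ordinal.nat_lt_omega0 n).trans_le (Ordinal.omega0_le_omega 1))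
  refine ⟨?_, ?_, ?_, ?_⟩
  · -- (i) infiniteness
    intro a ha
    constructor
    · by_contra hfin
      rw [Set.not_infinite] at hfin
      obtain ⟨N, hN⟩ := hfin.bddAbove
      obtain ⟨k, hkN, hk1, hkr⟩ := τ.r_inf 0 (N + 1)
      obtain ⟨j, rfl⟩ : ∃ j, k = j + 1 := ⟨k - 1, by omega⟩
      rcases xi_cases hCS hXinf hn ha j with hv | hv | hv
      · have := xi_nonneg_of_r0 hCS hXinf hn ha j hkr
        omega
      · have hmem : 2 * (j + 1) ∈ hgA τ 𝓕 (Set.Iio (Ordinal.omega 1)) a :=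
          ⟨j + 1, by omega, by simp [hv], by rw [hv]; push_cast; ring⟩
        have := hN hmem
        omega
      · have hmem : 2 * (j + 1) + 1 ∈ hgA τ 𝓕 (Set.Iio (Ordinal.omega 1)) a :=
          ⟨j + 1, by omega, by simp [hv], by rw [hv]; push_cast; ring⟩
        have := hN hmem
        omega
    · by_contra hfin
      rw [Set.not_infinite] at hfin
      obtain ⟨N, hN⟩ := hfin.bddAbove
      obtain ⟨k, hkN, hk1, hkr⟩ := τ.r_inf 0 (N + 1)
      obtain ⟨j, rfl⟩ : ∃ j, k = j + 1 := ⟨k - 1, by omega⟩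
      rcases xi_cases hCS hXinf hn ha j with hv | hv | hv
      · have := xi_nonneg_of_r0 hCS hXinf hn ha j hkr
        omega
      · have hmem : 2 * (j + 1) + 1 ∈ hgB τ 𝓕 (Set.Iio (Ordinal.omega 1)) a :=
          ⟨j + 1, by omega, by simp [hv], by rw [hv]; push_cast; ring⟩
        have := hN hmem
        omega
      · have hmem : 2 * (j + 1) ∈ hgB τ 𝓕 (Set.Iio (Ordinal.omega 1)) a :=
          ⟨j + 1, by omega, by simp [hv], by rw [hv]; push_cast; ring⟩
        have := hN hmem
        omega
  · -- (ii) disjointness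
    intro a ha
    rw [Set.eq_empty_iff_forall_notMem]
    rintro j ⟨⟨k, hk1, hk0, hkv⟩, ⟨k', hk1', hk0', hkv'⟩⟩
    obtain ⟨u, rfl⟩ : ∃ u, k = u + 1 := ⟨k - 1, by omega⟩
    obtain ⟨u', rfl⟩ : ∃ u', k' = u' + 1 := ⟨k' - 1, by omega⟩
    by_cases huu : u = u'
    · subst huu
      omega
    · have hb1 : csXi τ 𝓕 (Set.Iio (Ordinal.omega 1)) a (u + 1) ≤ 1 := by
        rcases xi_cases hCS hXinf hn ha u with h | h | h <;> omega
      have hb2 : csXi τ 𝓕 (Set.Iio (Ordinal.omega 1)) a (u' + 1) ≤ 1 := by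
        rcases xi_cases hCS hXinf hn ha u' with h | h | h <;> omega
      omega
  · -- (iii) towers
    intro a ha b hb hab
    constructor
    · apply Set.Finite.subset (Set.finite_Iio (2 * csRho τ 𝓕 a b + 2))
      rintro j ⟨⟨k, hk1, hk0, hkv⟩, hjB⟩
      obtain ⟨u, rfl⟩ : ∃ u, k = u + 1 := ⟨k - 1, by omega⟩
      by_cases hρ : csRho τ 𝓕 a b ≤ u
      · exfalso
        obtain ⟨heq, hpos⟩ := xi_succ_agree hCS hXinf hn ha hb hab u hρ hk0
        exact hjB ⟨u + 1, by omega, by rw [heq]; exact hk0, by rw [heq]; exact hkv⟩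
      · have hb1 : csXi τ 𝓕 (Set.Iio (Ordinal.omega 1)) a (u + 1) ≤ 1 := by
          rcases xi_cases hCS hXinf hn ha u with h | h | h <;> omega
        simp only [Set.mem_Iio]
        omega
    · apply Set.Finite.subset (Set.finite_Iio (2 * csRho τ 𝓕 a b + 2))
      rintro j ⟨⟨k, hk1, hk0, hkv⟩, hjB⟩
      obtain ⟨u, rfl⟩ : ∃ u, k = u + 1 := ⟨k - 1, by omega⟩
      by_cases hρ : csRho τ 𝓕 a b ≤ u
      · exfalso
        obtain ⟨heq, hpos⟩ := xi_succ_agree hCS hXinf hn ha hb hab u hρ hk0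
        exact hjB ⟨u + 1, by omega, by rw [heq]; exact hk0, by rw [heq]; exact hkv⟩
      · simp only [Set.mem_Iio]
        omega
  · -- (iv) Hausdorff condition
    intro b hb k
    obtain ⟨F, hF, hFc, hbF⟩ := exF hCS hXinf hb k
    apply Set.Finite.subset (Finset.finite_toSet (F.filter (fun x => x ≤ b)))
    rintro a ⟨hab, hsub⟩
    have haX : a ∈ Set.Iio (Ordinal.omega 1) := Set.mem_Iio.mpr (hab.trans (Set.mem_Iio.mp hb))
    obtain ⟨l, hl, hξa, hξb⟩ := xi_split hCS hn haX hb hab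
    have hmemA : 2 * (l + 1) + 1 ∈ hgA τ 𝓕 (Set.Iio (Ordinal.omega 1)) b :=
      ⟨l + 1, by omega, by simp [hξb], by rw [hξb]; push_cast; ring⟩
    have hmemB : 2 * (l + 1) + 1 ∈ hgB τ 𝓕 (Set.Iio (Ordinal.omega 1)) a :=
      ⟨l + 1, by omega, by simp [hξa], by rw [hξa]; push_cast; ring⟩
    have hlt : 2 * (l + 1) + 1 < k := hsub ⟨hmemA, hmemB⟩
    have hmem : a ∈ csClos τ 𝓕 (Set.Iio (Ordinal.omega 1)) k b := by
      simp only [csClos, Set.mem_setOf_eq]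
      exact ⟨haX, hab.le, by omega⟩
    rw [closEq hCS hb hF hFc hbF] at hmem
    exact hmem
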